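/- arXiv:math/0611848 — 2 statements merged into one kernel-verified Lean document; each statement's English description precedes it below -/
import Mathlib

section
/- Lagrangian concordance is transitive: if K₀, K₁, K₂ are Legendrian knots in (ℝ³, dz − y dx) with K₀ ≺ K₁ and K₁ ≺ K₂, then K₀ ≺ K₂. Together with reflexivity (via trivial cylinders), ≺ is a preorder on Legendrian knots. -/
open Real Set

noncomputable section

abbrev R3 : Type := ℝ × ℝ × ℝ
abbrev R4 : Type := R3 × ℝ

/-- The symplectisation form `ω = d(e^t α)` on `ℝ³ × ℝ` (coordinates ((x,y,z),t)),
where `α = dz - y dx`, evaluated at the point `p` on tangent vectors `u`, `v`: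
`ω = e^t((u₄v₃ - u₃v₄) - y(u₄v₁ - u₁v₄) + (u₁v₂ - u₂v₁))`. -/
def omegaSym (p u v : R4) : ℝ :=
  Real.exp p.2 *
    ((u.2 * v.1.2.2 - u.1.2.2 * v.2)
      - p.1.2.1 * (u.2 * v.1.1 - u.1.1 * v.2)
      + (u.1.1 * v.1.2.1 - u.1.2.1 * v.1.1))

/-- partial derivative of a parametrized cylinder in the circle variable -/
def pd1 (C : ℝ → ℝ → R4) (s t : ℝ) : R4 := deriv (fun u => C u t) s

/-- partial derivative of a parametrized cylinder in the ℝ variable -/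
def pd2 (C : ℝ → ℝ → R4) (s t : ℝ) : R4 := deriv (fun u => C s u) t

/-- A Legendrian knot in `(ℝ³, dz - y dx)`: a smooth embedding `γ` of `ℝ/2πℤ`
(modelled by a 2π-periodic map which is injective modulo the period and is an
immersion) satisfying `z'(s) = y(s) x'(s)` for all `s`. -/
structure IsLegendrianKnot (γ : ℝ → R3) : Prop where
  smooth : ContDiff ℝ (⊤ : ℕ∞) γ
  periodic : Function.Periodic γ (2 * π)
  inj : ∀ s₁ s₂ : ℝ, γ s₁ = γ s₂ → ∃ n : ℤ, s₂ = s₁ + n * (2 * π)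
  immersed : ∀ s, deriv γ s ≠ 0
  legendrian : ∀ s,
    deriv (fun u => (γ u).2.2) s = (γ s).2.1 * deriv (fun u => (γ u).1) s

/-- The image of the parametrized cylinder `C` is Lagrangian for `ω`:
`ω` restricts to zero on all of its tangent planes (which are spanned by the two
partial derivatives of `C`). -/
def IsLagrangianCyl (C : ℝ → ℝ → R4) : Prop :=
  ∀ s t, omegaSym (C s t) (pd1 C s t) (pd2 C s t) = 0

/-- A Lagrangian concordance from `K₀` to `K₁`: a smooth proper embedding of the
cylinder `(ℝ/2πℤ) × ℝ` into `ℝ³ × ℝ` with Lagrangian image, equal to the trivial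
cylinder over `K₀` (resp. `K₁`) for `t ≤ -T` (resp. `t ≥ T`). -/
structure IsLagConcordance (K₀ K₁ : ℝ → R3) (C : ℝ → ℝ → R4) : Prop where
  smooth : ContDiff ℝ (⊤ : ℕ∞) (fun p : ℝ × ℝ => C p.1 p.2)
  periodic : ∀ s t, C (s + 2 * π) t = C s t
  inj : ∀ s₁ t₁ s₂ t₂, C s₁ t₁ = C s₂ t₂ → t₁ = t₂ ∧ ∃ n : ℤ, s₂ = s₁ + n * (2 * π)
  immersed : ∀ s t, LinearIndependent ℝ ![pd1 C s t, pd2 C s t]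
  lagrangian : IsLagrangianCyl C
  ends : ∃ T > 0, (∀ s t, t ≤ -T → C s t = (K₀ s, t)) ∧
    (∀ s t, T ≤ t → C s t = (K₁ s, t))

/-- The Lagrangian concordance relation `K₀ ≺ K₁`. -/
def Prec (K₀ K₁ : ℝ → R3) : Prop := ∃ C, IsLagConcordance K₀ K₁ C

/-!
Translation `t ↦ t + b` of the symplectisation multiplies `ω = d(eᵗα)` by `eᵇ`, so it maps
Lagrangian concordances to Lagrangian concordances. A concordance moves the `t`-coordinate
by a bounded amount (it is a periodic continuous perturbation of the trivial cylinder on a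
compact range of `t`), so after translating the second concordance far enough upwards, the
two concordances coincide with the trivial cylinder over `K₁` on a common slab of levels and
lie on opposite sides of a level `t = c` inside it. Cutting both at `c` and concatenating
gives a concordance from `K₀` to `K₂`. Reflexivity is the trivial cylinder over `K`, which is
Lagrangian precisely because `K` is Legendrian.
-/

open Filter Topology Function

section Translation

def cylTranslate (b : ℝ) (C : ℝ → ℝ → R4) : ℝ → ℝ → R4 :=
  fun s t => C s (t - b) + ((0 : R3), b)

lemma pd1_cylTranslate (b : ℝ) (C : ℝ → ℝ → R4) (s t : ℝ) :
    pd1 (cylTranslate b C) s t = pd1 C s (t - b) :=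
  deriv_add_const _

lemma pd2_cylTranslate (b : ℝ) (C : ℝ → ℝ → R4) (s t : ℝ) :
    pd2 (cylTranslate b C) s t = pd2 C s (t - b) := by
  simp only [pd2, cylTranslate]
  rw [deriv_add_const, deriv_comp_sub_const]

lemma omegaSym_translate (b : ℝ) (p u v : R4) :
    omegaSym (p + ((0 : R3), b)) u v = Real.exp b * omegaSym p u v := by
  simp only [omegaSym, Prod.snd_add, Prod.fst_add, add_zero, Real.exp_add]
  ring

variable {K₀ K₁ : ℝ → R3} {C : ℝ → ℝ → R4}

theorem IsLagConcordance.cylTranslate (h : IsLagConcordance K₀ K₁ C) (b : ℝ) :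
    IsLagConcordance K₀ K₁ (cylTranslate b C) where
  smooth := (h.smooth.comp (contDiff_fst.prodMk (contDiff_snd.sub contDiff_const))).add
    contDiff_const
  periodic s t := by simp only [_root_.cylTranslate, h.periodic]
  inj s₁ t₁ s₂ t₂ he := by
    obtain ⟨ht, hs⟩ := h.inj _ _ _ _ (add_right_cancel he)
    exact ⟨by linarith, hs⟩
  immersed s t := by
    rw [pd1_cylTranslate, pd2_cylTranslate]
    exact h.immersed s (t - b)
  lagrangian s t := by
    rw [pd1_cylTranslate, pd2_cylTranslate, _root_.cylTranslate, omegaSym_translate,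
      h.lagrangian, mul_zero]
  ends := by
    obtain ⟨T, hT, h₀, h₁⟩ := h.ends
    refine ⟨T + |b|, by positivity, fun s t ht => ?_, fun s t ht => ?_⟩
    · rw [_root_.cylTranslate, h₀ s (t - b) (by linarith [neg_le_abs b])]
      simp
    · rw [_root_.cylTranslate, h₁ s (t - b) (by linarith [le_abs_self b])]
      simp

end Translation

section Concatenation

lemma pd1_congr {C D : ℝ → ℝ → R4} {s t : ℝ} (h : uncurry C =ᶠ[𝓝 (s, t)] uncurry D) :
    pd1 C s t = pd1 D s t :=
  (h.comp_tendsto ((Continuous.prodMk_left t).tendsto s)).deriv_eq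

lemma pd2_congr {C D : ℝ → ℝ → R4} {s t : ℝ} (h : uncurry C =ᶠ[𝓝 (s, t)] uncurry D) :
    pd2 C s t = pd2 D s t :=
  (h.comp_tendsto ((Continuous.prodMk_right s).tendsto t)).deriv_eq

def cylConcat (c : ℝ) (C C' : ℝ → ℝ → R4) : ℝ → ℝ → R4 :=
  fun s t => if t ≤ c then C s t else C' s t

variable {K₀ K₁ K₂ : ℝ → R3} {C C' : ℝ → ℝ → R4} {a b c : ℝ}

lemma cylConcat_eventuallyEq (hac : a < c) (hcb : c < b)
    (hagree : ∀ s t, a < t → t < b → C s t = C' s t) (p : ℝ × ℝ) :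
    uncurry (cylConcat c C C') =ᶠ[𝓝 p] uncurry C ∨
      uncurry (cylConcat c C C') =ᶠ[𝓝 p] uncurry C' := by
  rcases lt_or_ge p.2 b with hp | hp
  · left
    filter_upwards [continuous_snd.tendsto p (Iio_mem_nhds hp)] with q (hq : q.2 < b)
    by_cases hqc : q.2 ≤ c
    · simp [uncurry_def, cylConcat, hqc]
    · simp [uncurry_def, cylConcat, hqc, hagree q.1 q.2 (by linarith) hq]
  · right
    filter_upwards [continuous_snd.tendsto p (Ioi_mem_nhds (hac.trans (hcb.trans_le hp)))]
      with q (hq : a < q.2)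
    by_cases hqc : q.2 ≤ c
    · simp [uncurry_def, cylConcat, hqc, hagree q.1 q.2 hq (by linarith)]
    · simp [uncurry_def, cylConcat, hqc]

theorem IsLagConcordance.cylConcat (h : IsLagConcordance K₀ K₁ C)
    (h' : IsLagConcordance K₁ K₂ C') (hac : a < c) (hcb : c < b)
    (hC : ∀ s t, a < t → C s t = (K₁ s, t)) (hC' : ∀ s t, t < b → C' s t = (K₁ s, t))
    (hC_le : ∀ s t, t ≤ c → (C s t).2 ≤ c) (hC'_gt : ∀ s t, c < t → c < (C' s t).2) :
    IsLagConcordance K₀ K₂ (cylConcat c C C') := by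
  have hloc := cylConcat_eventuallyEq hac hcb fun s t ha hb => (hC s t ha).trans (hC' s t hb).symm
  refine ⟨?_, ?_, ?_, ?_, ?_, ?_⟩
  · refine contDiff_iff_contDiffAt.mpr fun p => ?_
    rcases hloc p with e | e
    · exact h.smooth.contDiffAt.congr_of_eventuallyEq e
    · exact h'.smooth.contDiffAt.congr_of_eventuallyEq e
  · intro s t
    simp only [_root_.cylConcat, h.periodic, h'.periodic]
  · intro s₁ t₁ s₂ t₂ he
    by_cases h₁ : t₁ ≤ c <;> by_cases h₂ : t₂ ≤ c <;>
      simp only [_root_.cylConcat, h₁, h₂, if_true, if_false] at he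
    · exact h.inj _ _ _ _ he
    · linarith [hC_le s₁ t₁ h₁, hC'_gt s₂ t₂ (not_le.mp h₂), congrArg Prod.snd he]
    · linarith [hC_le s₂ t₂ h₂, hC'_gt s₁ t₁ (not_le.mp h₁), congrArg Prod.snd he]
    · exact h'.inj _ _ _ _ he
  · intro s t
    rcases hloc (s, t) with e | e <;> rw [pd1_congr e, pd2_congr e]
    exacts [h.immersed s t, h'.immersed s t]
  · intro s t
    change omegaSym (uncurry (_root_.cylConcat c C C') (s, t)) _ _ = 0
    rcases hloc (s, t) with e | e <;> rw [pd1_congr e, pd2_congr e, e.eq_of_nhds]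
    exacts [h.lagrangian s t, h'.lagrangian s t]
  · obtain ⟨T₀, -, h₀, -⟩ := h.ends
    obtain ⟨T₂, -, -, h₂⟩ := h'.ends
    have := abs_nonneg T₀
    have := abs_nonneg T₂
    have := abs_nonneg c
    refine ⟨|T₀| + |T₂| + |c| + 1, by positivity, fun s t ht => ?_, fun s t ht => ?_⟩
    · have htc : t ≤ c := by linarith [neg_abs_le c]
      rw [_root_.cylConcat, if_pos htc, h₀ s t (by linarith [le_abs_self T₀])]
    · have htc : ¬ t ≤ c := by linarith [le_abs_self c]
      rw [_root_.cylConcat, if_neg htc, h₂ s t (by linarith [le_abs_self T₂])]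

end Concatenation

lemma exists_norm_le_of_periodic_of_isCompact {E : Type*} [SeminormedAddCommGroup E]
    {f : ℝ → ℝ → E} (hf : Continuous (uncurry f)) {p : ℝ} (hp : 0 < p)
    (hper : ∀ s t, f (s + p) t = f s t) {K : Set ℝ} (hK : IsCompact K) :
    ∃ M, ∀ s, ∀ t ∈ K, ‖f s t‖ ≤ M := by
  obtain ⟨M, hM⟩ := (isCompact_Icc.prod hK).bddAbove_image hf.norm.continuousOn
  refine ⟨M, fun s t ht => ?_⟩
  have hper_t : Periodic (fun u => f u t) p := fun u => hper u t
  obtain ⟨y, hy, hsy⟩ := hper_t.exists_mem_Ico₀ hp s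
  rw [hsy]
  exact hM ⟨(y, t), ⟨Ico_subset_Icc_self hy, ht⟩, rfl⟩

section Preorder

variable {K K₀ K₁ K₂ : ℝ → R3} {C : ℝ → ℝ → R4}

theorem IsLagConcordance.exists_abs_snd_sub_le (h : IsLagConcordance K₀ K₁ C) :
    ∃ M, ∀ s t, |(C s t).2 - t| ≤ M := by
  obtain ⟨T, -, h₀, h₁⟩ := h.ends
  obtain ⟨M, hM⟩ := exists_norm_le_of_periodic_of_isCompact (f := fun s t => (C s t).2 - t)
    ((continuous_snd.comp h.smooth.continuous).sub continuous_snd) Real.two_pi_pos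
    (fun s t => by simp only [h.periodic]) (isCompact_Icc (a := -T) (b := T))
  refine ⟨max M 0, fun s t => ?_⟩
  rcases le_or_gt t (-T) with ht | ht
  · simp [h₀ s t ht]
  rcases le_or_gt T t with ht' | ht'
  · simp [h₁ s t ht']
  · exact (hM s t ⟨ht.le, ht'.le⟩).trans (le_max_left _ _)

theorem Prec.trans (h₀₁ : Prec K₀ K₁) (h₁₂ : Prec K₁ K₂) : Prec K₀ K₂ := by
  obtain ⟨C, hC⟩ := h₀₁
  obtain ⟨C', hC'⟩ := h₁₂
  obtain ⟨T, -, -, hC₁⟩ := hC.ends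
  obtain ⟨T', -, hC'₁, -⟩ := hC'.ends
  obtain ⟨M, hM⟩ := hC.exists_abs_snd_sub_le
  obtain ⟨M', hM'⟩ := hC'.exists_abs_snd_sub_le
  have hM₀ : 0 ≤ M := (abs_nonneg _).trans (hM 0 0)
  have hM'₀ : 0 ≤ M' := (abs_nonneg _).trans (hM' 0 0)
  -- Below level `c` the `t`-coordinate of `C` stays `≤ c`; the translate of `C'` by `b` is
  -- cylindrical below `b - T' > c + M'`, so above level `c` its `t`-coordinate stays `> c`.
  set c := T + M + 1
  set b := c + T' + M' + 1
  refine ⟨_, hC.cylConcat (hC'.cylTranslate b) (a := T) (c := c) (b := c + M' + 1) (by linarith)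
    (by linarith) (fun s t ht => hC₁ s t ht.le) (fun s t ht => ?_) (fun s t ht => ?_)
    (fun s t ht => ?_)⟩
  · rw [cylTranslate, hC'₁ s (t - b) (by linarith)]
    simp
  · rcases le_or_gt T t with hT | hT
    · rw [hC₁ s t hT]
      exact ht
    · linarith [(abs_le.mp (hM s t)).2]
  · simp only [cylTranslate, Prod.snd_add]
    rcases le_or_gt (t - b) (-T') with hT | hT
    · rw [hC'₁ s _ hT]
      linarith
    · linarith [(abs_le.mp (hM' s (t - b))).1]

lemma IsLegendrianKnot.deriv_snd_snd (hK : IsLegendrianKnot K) (s : ℝ) :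
    (deriv K s).2.2 = (K s).2.1 * (deriv K s).1 := by
  have hd := ((hK.smooth.differentiable (by simp)) s).hasDerivAt
  have hx := (hasFDerivAt_fst (𝕜 := ℝ) (p := K s)).comp_hasDerivAt s hd
  have hz := (hasFDerivAt_snd (𝕜 := ℝ) (p := (K s).2)).comp_hasDerivAt s
    ((hasFDerivAt_snd (𝕜 := ℝ) (p := K s)).comp_hasDerivAt s hd)
  calc (deriv K s).2.2 = deriv (fun u => (K u).2.2) s := hz.deriv.symm
    _ = (K s).2.1 * deriv (fun u => (K u).1) s := hK.legendrian s
    _ = (K s).2.1 * (deriv K s).1 := congrArg _ hx.deriv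

theorem Prec.refl (hK : IsLegendrianKnot K) : Prec K K := by
  have hpd1 (s t : ℝ) : pd1 (fun s t => ((K s, t) : R4)) s t = (deriv K s, 0) :=
    ((hK.smooth.differentiable (by simp) s).hasDerivAt.prodMk (hasDerivAt_const s t)).deriv
  have hpd2 (s t : ℝ) : pd2 (fun s t => ((K s, t) : R4)) s t = (0, 1) :=
    ((hasDerivAt_const t (K s)).prodMk (hasDerivAt_id t)).deriv
  refine ⟨fun s t => (K s, t),
    ⟨?_, ?_, ?_, ?_, ?_, 1, one_pos, fun _ _ _ => rfl, fun _ _ _ => rfl⟩⟩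
  · exact (hK.smooth.comp contDiff_fst).prodMk contDiff_snd
  · intro s t
    rw [hK.periodic s]
  · intro s₁ t₁ s₂ t₂ he
    exact ⟨(Prod.mk.inj he).2, hK.inj s₁ s₂ (Prod.mk.inj he).1⟩
  · intro s t
    rw [hpd1, hpd2, linearIndependent_fin2]
    refine ⟨by simp, fun r hr => hK.immersed s ?_⟩
    simpa using (congrArg Prod.fst hr).symm
  · intro s t
    rw [hpd1, hpd2]
    simp [omegaSym, hK.deriv_snd_snd s]

end Preorder

/-- Lagrangian concordance is transitive, and together with
reflexivity (via trivial cylinders), `≺` is a preorder on Legendrian knots. -/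
theorem stmt2 :
    (∀ K₀ K₁ K₂ : ℝ → R3, IsLegendrianKnot K₀ → IsLegendrianKnot K₁ →
      IsLegendrianKnot K₂ → Prec K₀ K₁ → Prec K₁ K₂ → Prec K₀ K₂) ∧
    (∀ K : ℝ → R3, IsLegendrianKnot K → Prec K K) :=
  ⟨fun _ _ _ _ _ _ => Prec.trans, fun _ => Prec.refl⟩
end
end

section
/- Let K₀ and K₁ be Legendrian knots in (ℝ³, dz − y dx) and let H : (ℝ/2πℤ) × [0,1] → ℝ³ be a Legendrian isotopy with H(·,0) = K₀ and H(·,1) = K₁. Then K₀ ≺ K₁, i.e. there exists a Lagrangian concordance C from K₀ to K₁. Moreover, for every ε > 0 the concordance C can be chosen C⁰-close to the graph of H: there is a smooth weakly increasing surjection β : ℝ → [0,1] such that |C(s,t) − (H(s,β(t)), t)| < ε for all (s,t). -/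
open Real Set

noncomputable section

/-!
The concordance is the graph of the isotopy, slowed down by a smooth step `β` and corrected in
the Reeb direction: `C(s, t) = (x, y, z + β'(t) h, t)` evaluated at `(s, β t)`, where
`h = α(∂ᵤH) = ∂ᵤz - y ∂ᵤx` is the contact Hamiltonian of the isotopy. Each knot is Legendrian,
`∂ₛz = y ∂ₛx`, and differentiating this in `u` gives `∂ₛh = ∂ₛx ∂ᵤy - ∂ₛy ∂ᵤx`; these two
identities are exactly what makes `ω(∂ₛC, ∂ₜC)` vanish. The correction moves only `z`, by at most
`sup |β'| · sup |h|`, so for `β` slow enough every slice stays embedded: nearby parameters are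
separated by the immersed Lagrangian projection `(x, y)`, distant ones by the uniform separation
of the compact family of embedded knots. The same bound gives the `C⁰`-closeness.
-/

open Filter Function

section Calculus

variable {E : Type*} [NormedAddCommGroup E] [NormedSpace ℝ E]

def partialFst (F : ℝ × ℝ → E) (p : ℝ × ℝ) : E := fderiv ℝ F p (1, 0)

def partialSnd (F : ℝ × ℝ → E) (p : ℝ × ℝ) : E := fderiv ℝ F p (0, 1)

variable {F : ℝ × ℝ → E}

lemma DifferentiableAt.hasDerivAt_partialFst {s u : ℝ} (hF : DifferentiableAt ℝ F (s, u)) :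
    HasDerivAt (fun a => F (a, u)) (partialFst F (s, u)) s :=
  hF.hasFDerivAt.comp_hasDerivAt s ((hasDerivAt_id s).prodMk (hasDerivAt_const s u))

lemma DifferentiableAt.hasDerivAt_partialSnd {s u : ℝ} (hF : DifferentiableAt ℝ F (s, u)) :
    HasDerivAt (fun a => F (s, a)) (partialSnd F (s, u)) u :=
  hF.hasFDerivAt.comp_hasDerivAt u ((hasDerivAt_const u s).prodMk (hasDerivAt_id u))

lemma DifferentiableAt.hasDerivAt_comp_partialSnd {β : ℝ → ℝ} {b s t : ℝ}
    (hF : DifferentiableAt ℝ F (s, β t)) (hβ : HasDerivAt β b t) :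
    HasDerivAt (fun a => F (s, β a)) (b • partialSnd F (s, β t)) t := by
  have h := hF.hasFDerivAt.comp_hasDerivAt t ((hasDerivAt_const t s).prodMk hβ)
  rwa [show ((0 : ℝ), b) = b • ((0 : ℝ), (1 : ℝ)) by simp, map_smul] at h

lemma ContDiff.contDiff_partialFst (hF : ContDiff ℝ (⊤ : ℕ∞) F) :
    ContDiff ℝ (⊤ : ℕ∞) (partialFst F) :=
  (hF.fderiv_right (m := (⊤ : ℕ∞)) le_rfl).clm_apply contDiff_const

lemma ContDiff.contDiff_partialSnd (hF : ContDiff ℝ (⊤ : ℕ∞) F) :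
    ContDiff ℝ (⊤ : ℕ∞) (partialSnd F) :=
  (hF.fderiv_right (m := (⊤ : ℕ∞)) le_rfl).clm_apply contDiff_const

lemma ContDiff.hasDerivAt_partialFst (hF : ContDiff ℝ (⊤ : ℕ∞) F) (s u : ℝ) :
    HasDerivAt (fun a => F (a, u)) (partialFst F (s, u)) s :=
  (hF.differentiable (by simp) _).hasDerivAt_partialFst

lemma ContDiff.hasDerivAt_partialSnd (hF : ContDiff ℝ (⊤ : ℕ∞) F) (s u : ℝ) :
    HasDerivAt (fun a => F (s, a)) (partialSnd F (s, u)) u :=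
  (hF.differentiable (by simp) _).hasDerivAt_partialSnd

lemma partialFst_partialSnd_comm (hF : ContDiff ℝ (⊤ : ℕ∞) F) (p : ℝ × ℝ) :
    partialFst (partialSnd F) p = partialSnd (partialFst F) p := by
  have hdF : Differentiable ℝ (fderiv ℝ F) :=
    (hF.fderiv_right (m := (⊤ : ℕ∞)) le_rfl).differentiable (by simp)
  have hflip (v w : ℝ × ℝ) :
      fderiv ℝ (fun q => fderiv ℝ F q v) p w = fderiv ℝ (fderiv ℝ F) p w v := by
    simp [fderiv_clm_apply (hdF p) (differentiableAt_const v)]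
  unfold partialFst partialSnd
  rw [hflip, hflip]
  exact hF.contDiffAt.isSymmSndFDerivAt
    (by simp only [minSmoothness_of_isRCLikeNormedField]; exact WithTop.coe_le_coe.2 le_top) _ _

lemma partialSnd_congr_of_eqOn_Icc {G : ℝ × ℝ → E} {s s' u a b : ℝ} (hab : a < b)
    (hu : u ∈ Icc a b)
    (hF : DifferentiableAt ℝ F (s, u)) (hG : DifferentiableAt ℝ G (s', u))
    (hFG : ∀ v ∈ Icc a b, F (s, v) = G (s', v)) :
    partialSnd F (s, u) = partialSnd G (s', u) :=
  (uniqueDiffOn_Icc hab u hu).eq_deriv _ hF.hasDerivAt_partialSnd.hasDerivWithinAt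
    (hG.hasDerivAt_partialSnd.hasDerivWithinAt.congr hFG (hFG u hu))

lemma eq_of_apply_eq_of_norm_deriv2_le {f f' f'' : ℝ → E} {a b M : ℝ}
    (hf : ∀ x ∈ uIcc a b, HasDerivAt f (f' x) x) (hf' : ∀ x ∈ uIcc a b, HasDerivAt f' (f'' x) x)
    (hM : ∀ x ∈ uIcc a b, ‖f'' x‖ ≤ M) (hab : M * |b - a| < ‖f' a‖) (heq : f a = f b) :
    a = b := by
  by_contra hne
  have hM0 : 0 ≤ M := (norm_nonneg _).trans (hM a left_mem_uIcc)
  have hvel : ∀ x ∈ uIcc a b, ‖f' x - f' a‖ ≤ M * |b - a| := fun x hx =>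
    calc ‖f' x - f' a‖ ≤ M * ‖x - a‖ :=
          (convex_uIcc a b).norm_image_sub_le_of_norm_hasDerivWithin_le
            (fun y hy => (hf' y hy).hasDerivWithinAt) hM left_mem_uIcc hx
      _ ≤ M * |b - a| := by
          gcongr
          exact abs_sub_left_of_mem_uIcc hx
  have hψ : ∀ x ∈ uIcc a b, HasDerivAt (fun y => f y - y • f' a) (f' x - f' a) x := fun x hx => by
    have := (hf x hx).sub ((hasDerivAt_id x).smul_const (f' a))
    rwa [one_smul] at this
  have hbound := (convex_uIcc a b).norm_image_sub_le_of_norm_hasDerivWithin_le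
    (fun x hx => (hψ x hx).hasDerivWithinAt) hvel left_mem_uIcc right_mem_uIcc
  have hdiff : (f b - b • f' a) - (f a - a • f' a) = -((b - a) • f' a) := by
    rw [heq, sub_smul]; abel
  rw [hdiff, norm_neg, norm_smul, Real.norm_eq_abs] at hbound
  have hpos : 0 < |b - a| := abs_pos.2 (sub_ne_zero.2 (Ne.symm hne))
  nlinarith

end Calculus

lemma Function.Periodic.exists_int_eq_add_of_apply_eq {α : Type*} {f : ℝ → α} {c : ℝ}
    (hf : Periodic f c) (hc : 0 < c)
    (hloc : ∀ s₁ ∈ Icc 0 c, ∀ s₂, |s₂ - s₁| ≤ c / 2 → f s₁ = f s₂ → s₁ = s₂)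
    {s₁ s₂ : ℝ} (heq : f s₁ = f s₂) : ∃ n : ℤ, s₂ = s₁ + n * c := by
  set n₁ := toIcoDiv hc 0 s₁
  set n₂ := toIcoDiv hc (s₁ - n₁ • c - c / 2) s₂
  have h₁ := sub_toIcoDiv_zsmul_mem_Ico hc 0 s₁
  have h₂ := sub_toIcoDiv_zsmul_mem_Ico hc (s₁ - n₁ • c - c / 2) s₂
  have key : s₁ - n₁ • c = s₂ - n₂ • c := by
    refine hloc _ (Ico_subset_Icc_self (by simpa only [zero_add] using h₁)) _ ?_ ?_
    · rw [abs_le]; constructor <;> linarith [h₂.1, h₂.2]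
    · rw [hf.sub_zsmul_eq, hf.sub_zsmul_eq, heq]
  refine ⟨n₂ - n₁, ?_⟩
  simp only [zsmul_eq_mul] at key
  push_cast
  linarith

lemma linearIndependent_pair_of_snd {K E : Type*} [Field K] [AddCommGroup E] [Module K E]
    {v w : E × K} (hv : v ≠ 0) (hv₂ : v.2 = 0) (hw₂ : w.2 ≠ 0) :
    LinearIndependent K ![v, w] := by
  rw [linearIndependent_fin2]
  refine ⟨fun hw => hw₂ (by rw [show w = 0 from hw]; rfl), fun a ha => hv ?_⟩
  change a • w = v at ha
  have ha₂ : a * w.2 = 0 := by rw [← hv₂, ← ha]; rfl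
  rw [← ha, (mul_eq_zero.1 ha₂).resolve_right hw₂, zero_smul]

lemma hasCompactSupport_deriv_smoothTransition : HasCompactSupport (deriv smoothTransition) := by
  refine HasCompactSupport.intro isCompact_Icc (K := Icc 0 1) fun x hx => ?_
  rcases not_and_or.1 hx with hx | hx <;> push Not at hx
  · refine IsLocalMin.deriv_eq_zero (Eventually.of_forall fun y => ?_)
    rw [smoothTransition.zero_of_nonpos hx.le]
    exact smoothTransition.nonneg y
  · refine IsLocalMax.deriv_eq_zero (Eventually.of_forall fun y => ?_)
    rw [smoothTransition.one_of_one_le hx.le]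
    exact smoothTransition.le_one y

lemma range_smoothTransition : range smoothTransition = Icc 0 1 := by
  refine (range_subset_iff.2 fun x =>
    show _ ∈ Icc (0 : ℝ) 1 from ⟨smoothTransition.nonneg x, smoothTransition.le_one x⟩).antisymm ?_
  have := intermediate_value_Icc zero_le_one smoothTransition.continuous.continuousOn
  rw [smoothTransition.zero, smoothTransition.one] at this
  exact this.trans (image_subset_range _ _)

lemma exists_smooth_step {c : ℝ} (hc : 0 < c) :
    ∃ β : ℝ → ℝ, ContDiff ℝ (⊤ : ℕ∞) β ∧ Monotone β ∧ range β = Icc 0 1 ∧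
      (∃ T > 0, (∀ t ≤ -T, β t = 0) ∧ ∀ t ≥ T, β t = 1) ∧ ∀ t, |deriv β t| ≤ c := by
  obtain ⟨B, hB⟩ := (smoothTransition.contDiff (n := 1) |>.continuous_deriv le_rfl)
    |>.bounded_above_of_compact_support hasCompactSupport_deriv_smoothTransition
  have hB0 : 0 ≤ B := (norm_nonneg _).trans (hB 0)
  set L := (B + 1) / c
  have hL : 0 < L := by positivity
  refine ⟨fun t => smoothTransition (t / L),
    smoothTransition.contDiff.comp (contDiff_id.div_const L),
    smoothTransition.monotone.comp fun x y hxy => div_le_div_of_nonneg_right hxy hL.le, ?_,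
    ⟨L, hL, fun t ht => smoothTransition.zero_of_nonpos
        (div_nonpos_of_nonpos_of_nonneg (by linarith) hL.le),
      fun t ht => smoothTransition.one_of_one_le ((one_le_div hL).2 ht)⟩, fun t => ?_⟩
  · rw [← range_smoothTransition]
    exact Surjective.range_comp (f := fun t => t / L)
      (fun x => ⟨x * L, mul_div_cancel_right₀ x hL.ne'⟩) smoothTransition
  · have hd : HasDerivAt (fun t => smoothTransition (t / L))
        (deriv smoothTransition (t / L) * (1 / L)) t :=
      ((smoothTransition.contDiff (n := 1)).differentiable one_ne_zero _).hasDerivAt.comp t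
        (by simpa using (hasDerivAt_id t).div_const L)
    rw [hd.deriv, abs_mul, abs_of_pos (one_div_pos.2 hL)]
    calc |deriv smoothTransition (t / L)| * (1 / L) ≤ B * (1 / L) := by
          gcongr; exact hB _
      _ ≤ c := by
          rw [mul_one_div, div_le_iff₀ hL, mul_div_cancel₀ _ hc.ne']
          linarith

lemma IsLegendrianKnot.apply_ne_of_abs_sub_lt {γ : ℝ → R3} (hγ : IsLegendrianKnot γ) {s₁ s₂ : ℝ}
    (hne : s₁ ≠ s₂) (hd : |s₂ - s₁| < 2 * π) : γ s₁ ≠ γ s₂ := fun h => by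
  obtain ⟨n, rfl⟩ := hγ.inj s₁ s₂ h
  rw [add_sub_cancel_left, abs_mul, abs_of_pos two_pi_pos] at hd
  have hn : n = 0 := by
    have : |(n : ℝ)| < 1 := by nlinarith [two_pi_pos]
    exact Int.abs_lt_one_iff.1 (by exact_mod_cast this)
  simp [hn] at hne

structure IsLegendrianIsotopy (H : ℝ → ℝ → R3) : Prop where
  smooth : ContDiff ℝ (⊤ : ℕ∞) (fun p : ℝ × ℝ => H p.1 p.2)
  legendrian : ∀ u ∈ Icc (0 : ℝ) 1, IsLegendrianKnot fun s => H s u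

def coordX (H : ℝ → ℝ → R3) (p : ℝ × ℝ) : ℝ := (H p.1 p.2).1

def coordY (H : ℝ → ℝ → R3) (p : ℝ × ℝ) : ℝ := (H p.1 p.2).2.1

def coordZ (H : ℝ → ℝ → R3) (p : ℝ × ℝ) : ℝ := (H p.1 p.2).2.2

def contactHamiltonian (H : ℝ → ℝ → R3) (p : ℝ × ℝ) : ℝ :=
  partialSnd (coordZ H) p - coordY H p * partialSnd (coordX H) p

def InjectiveModTwoPi {α : Type*} (f : ℝ → α) : Prop :=
  ∀ s₁ s₂, f s₁ = f s₂ → ∃ n : ℤ, s₂ = s₁ + n * (2 * π)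

def reebPushoff (H : ℝ → ℝ → R3) (u c s : ℝ) : R3 :=
  (coordX H (s, u), coordY H (s, u), coordZ H (s, u) + c * contactHamiltonian H (s, u))

def concordanceCyl (H : ℝ → ℝ → R3) (β : ℝ → ℝ) (s t : ℝ) : R4 :=
  (reebPushoff H (β t) (deriv β t) s, t)

lemma reebPushoff_zero (H : ℝ → ℝ → R3) (u s : ℝ) : reebPushoff H u 0 s = H s u := by
  simp [reebPushoff, coordX, coordY, coordZ]

lemma dist_reebPushoff (H : ℝ → ℝ → R3) (u c s : ℝ) :
    dist (reebPushoff H u c s) (H s u) = |c * contactHamiltonian H (s, u)| := by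
  simp only [reebPushoff, coordX, coordY, coordZ, Prod.dist_eq, dist_self, dist_self_add_left,
    norm_mul, norm_eq_abs, le_sup_left, sup_of_le_right, abs_mul, sup_eq_right]
  positivity

lemma dist_concordanceCyl (H : ℝ → ℝ → R3) (β : ℝ → ℝ) (s t : ℝ) :
    dist (concordanceCyl H β s t) (H s (β t), t) =
      |deriv β t| * |contactHamiltonian H (s, β t)| := by
  rw [concordanceCyl, Prod.dist_eq, dist_self, max_eq_left dist_nonneg, dist_reebPushoff, abs_mul]

namespace IsLegendrianIsotopy

variable {H : ℝ → ℝ → R3} (hH : IsLegendrianIsotopy H) {u : ℝ} {β : ℝ → ℝ}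
include hH

lemma contDiff_coordX : ContDiff ℝ (⊤ : ℕ∞) (coordX H) := hH.smooth.fst

lemma contDiff_coordY : ContDiff ℝ (⊤ : ℕ∞) (coordY H) := hH.smooth.snd.fst

lemma contDiff_coordZ : ContDiff ℝ (⊤ : ℕ∞) (coordZ H) := hH.smooth.snd.snd

lemma contDiff_contactHamiltonian : ContDiff ℝ (⊤ : ℕ∞) (contactHamiltonian H) :=
  hH.contDiff_coordZ.contDiff_partialSnd.sub
    (hH.contDiff_coordY.mul hH.contDiff_coordX.contDiff_partialSnd)

lemma hasDerivAt_knot (s u : ℝ) :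
    HasDerivAt (fun a => H a u)
      (partialFst (coordX H) (s, u), partialFst (coordY H) (s, u),
        partialFst (coordZ H) (s, u)) s :=
  (hH.contDiff_coordX.hasDerivAt_partialFst s u).prodMk
    ((hH.contDiff_coordY.hasDerivAt_partialFst s u).prodMk
      (hH.contDiff_coordZ.hasDerivAt_partialFst s u))

lemma partialFst_coordZ (s : ℝ) (hu : u ∈ Icc 0 1) :
    partialFst (coordZ H) (s, u) = coordY H (s, u) * partialFst (coordX H) (s, u) := by
  have h := (hH.legendrian u hu).legendrian s
  have hx : deriv (fun a => (H a u).1) s = partialFst (coordX H) (s, u) :=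
    (hH.contDiff_coordX.hasDerivAt_partialFst s u).deriv
  have hz : deriv (fun a => (H a u).2.2) s = partialFst (coordZ H) (s, u) :=
    (hH.contDiff_coordZ.hasDerivAt_partialFst s u).deriv
  rwa [hx, hz] at h

lemma partialFst_coordXY_ne_zero (s : ℝ) (hu : u ∈ Icc 0 1) :
    (partialFst (coordX H) (s, u), partialFst (coordY H) (s, u)) ≠ 0 := by
  intro h
  have hx : partialFst (coordX H) (s, u) = 0 := congrArg Prod.fst h
  have hy : partialFst (coordY H) (s, u) = 0 := congrArg Prod.snd h
  apply (hH.legendrian u hu).immersed s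
  rw [(hH.hasDerivAt_knot s u).deriv, hH.partialFst_coordZ s hu, hx, hy, mul_zero]
  rfl

lemma contactHamiltonian_periodic (hu : u ∈ Icc 0 1) :
    Periodic (fun s => contactHamiltonian H (s, u)) (2 * π) := fun s => by
  have hsnd {G : ℝ × ℝ → ℝ} (hG : ContDiff ℝ (⊤ : ℕ∞) G)
      (hGper : ∀ v ∈ Icc (0 : ℝ) 1, G (s + 2 * π, v) = G (s, v)) :
      partialSnd G (s + 2 * π, u) = partialSnd G (s, u) :=
    partialSnd_congr_of_eqOn_Icc zero_lt_one hu (hG.differentiable (by simp) _)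
      (hG.differentiable (by simp) _) hGper
  have hHper (v) (hv : v ∈ Icc (0 : ℝ) 1) : H (s + 2 * π) v = H s v :=
    (hH.legendrian v hv).periodic s
  simp only [contactHamiltonian]
  rw [hsnd hH.contDiff_coordZ fun v hv => congrArg (·.2.2) (hHper v hv),
    hsnd hH.contDiff_coordX fun v hv => congrArg (·.1) (hHper v hv)]
  simp only [coordY, hHper u hu]

lemma partialFst_contactHamiltonian (s : ℝ) (hu : u ∈ Icc 0 1) :
    partialFst (contactHamiltonian H) (s, u) =
      partialFst (coordX H) (s, u) * partialSnd (coordY H) (s, u) -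
        partialFst (coordY H) (s, u) * partialSnd (coordX H) (s, u) := by
  set X := coordX H
  set Y := coordY H
  set Z := coordZ H
  have hX : ContDiff ℝ (⊤ : ℕ∞) X := hH.contDiff_coordX
  have hY : ContDiff ℝ (⊤ : ℕ∞) Y := hH.contDiff_coordY
  have hZ : ContDiff ℝ (⊤ : ℕ∞) Z := hH.contDiff_coordZ
  have hYXs : ContDiff ℝ (⊤ : ℕ∞) fun q => Y q * partialFst X q := hY.mul hX.contDiff_partialFst
  have hZsu : partialSnd (partialFst Z) (s, u) =
      partialSnd Y (s, u) * partialFst X (s, u) + Y (s, u) * partialSnd (partialFst X) (s, u) := by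
    rw [partialSnd_congr_of_eqOn_Icc zero_lt_one hu
      (hZ.contDiff_partialFst.differentiable (by simp) _) (hYXs.differentiable (by simp) _)
      fun v hv => hH.partialFst_coordZ s hv]
    exact (hYXs.hasDerivAt_partialSnd s u).unique
      ((hY.hasDerivAt_partialSnd s u).mul (hX.contDiff_partialFst.hasDerivAt_partialSnd s u))
  have hs := (hZ.contDiff_partialSnd.hasDerivAt_partialFst s u).sub
    ((hY.hasDerivAt_partialFst s u).mul (hX.contDiff_partialSnd.hasDerivAt_partialFst s u))
  rw [(hH.contDiff_contactHamiltonian.hasDerivAt_partialFst s u).unique hs,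
    partialFst_partialSnd_comm hZ, hZsu, partialFst_partialSnd_comm hX]
  ring

lemma reebPushoff_periodic {u : ℝ} (hu : u ∈ Icc 0 1) (c : ℝ) :
    Periodic (reebPushoff H u c) (2 * π) := fun s => by
  have h := (hH.legendrian u hu).periodic s
  simp only [reebPushoff, coordX, coordY, coordZ, h, hH.contactHamiltonian_periodic hu s]

lemma contDiff_concordanceCyl (hβ : ContDiff ℝ (⊤ : ℕ∞) β) :
    ContDiff ℝ (⊤ : ℕ∞) fun p : ℝ × ℝ => concordanceCyl H β p.1 p.2 := by
  have hq : ContDiff ℝ (⊤ : ℕ∞) fun p : ℝ × ℝ => (p.1, β p.2) :=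
    contDiff_fst.prodMk (hβ.comp contDiff_snd)
  have hβ' : ContDiff ℝ (⊤ : ℕ∞) (deriv β) := (contDiff_infty_iff_deriv.1 hβ).2
  exact ((hH.contDiff_coordX.comp hq).prodMk ((hH.contDiff_coordY.comp hq).prodMk
    ((hH.contDiff_coordZ.comp hq).add ((hβ'.comp contDiff_snd).mul
      (hH.contDiff_contactHamiltonian.comp hq))))).prodMk contDiff_snd

lemma pd1_concordanceCyl (s t : ℝ) :
    pd1 (concordanceCyl H β) s t =
      ((partialFst (coordX H) (s, β t), partialFst (coordY H) (s, β t),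
        partialFst (coordZ H) (s, β t) +
          deriv β t * partialFst (contactHamiltonian H) (s, β t)), 0) :=
  (((hH.contDiff_coordX.hasDerivAt_partialFst s (β t)).prodMk
    ((hH.contDiff_coordY.hasDerivAt_partialFst s (β t)).prodMk
      ((hH.contDiff_coordZ.hasDerivAt_partialFst s (β t)).add
        ((hH.contDiff_contactHamiltonian.hasDerivAt_partialFst s (β t)).const_mul
          (deriv β t))))).prodMk (hasDerivAt_const s t)).deriv

lemma pd2_concordanceCyl (hβ : ContDiff ℝ (⊤ : ℕ∞) β) (s t : ℝ) :
    pd2 (concordanceCyl H β) s t =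
      ((deriv β t * partialSnd (coordX H) (s, β t), deriv β t * partialSnd (coordY H) (s, β t),
        deriv β t * partialSnd (coordZ H) (s, β t) +
          (deriv (deriv β) t * contactHamiltonian H (s, β t) +
            deriv β t * (deriv β t * partialSnd (contactHamiltonian H) (s, β t)))), 1) := by
  have hd {f : ℝ → ℝ} (hf : ContDiff ℝ (⊤ : ℕ∞) f) : HasDerivAt f (deriv f t) t :=
    (hf.differentiable (by simp) t).hasDerivAt
  have hslice {G : ℝ × ℝ → ℝ} (hG : ContDiff ℝ (⊤ : ℕ∞) G) :
      HasDerivAt (fun a => G (s, β a)) (deriv β t * partialSnd G (s, β t)) t :=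
    (hG.differentiable (by simp) _).hasDerivAt_comp_partialSnd (hd hβ)
  exact ((hslice hH.contDiff_coordX).prodMk ((hslice hH.contDiff_coordY).prodMk
    ((hslice hH.contDiff_coordZ).add ((hd (contDiff_infty_iff_deriv.1 hβ).2).mul
      (hslice hH.contDiff_contactHamiltonian))))).prodMk (hasDerivAt_id t) |>.deriv

lemma isLagrangianCyl_concordanceCyl (hβ : ContDiff ℝ (⊤ : ℕ∞) β)
    (hβI : ∀ t, β t ∈ Icc 0 1) : IsLagrangianCyl (concordanceCyl H β) := fun s t => by
  rw [pd1_concordanceCyl hH, pd2_concordanceCyl hH hβ, omegaSym]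
  simp only [concordanceCyl, reebPushoff, hH.partialFst_coordZ s (hβI t),
    hH.partialFst_contactHamiltonian s (hβI t)]
  ring

lemma linearIndependent_pd_concordanceCyl (hβ : ContDiff ℝ (⊤ : ℕ∞) β)
    (hβI : ∀ t, β t ∈ Icc 0 1) (s t : ℝ) :
    LinearIndependent ℝ ![pd1 (concordanceCyl H β) s t, pd2 (concordanceCyl H β) s t] := by
  rw [pd1_concordanceCyl hH, pd2_concordanceCyl hH hβ]
  refine linearIndependent_pair_of_snd (fun h => hH.partialFst_coordXY_ne_zero s (hβI t) ?_) rfl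
    one_ne_zero
  exact Prod.ext (congrArg (·.1.1) h) (congrArg (·.1.2.1) h)

lemma exists_abs_contactHamiltonian_le :
    ∃ M, ∀ s, ∀ u ∈ Icc (0 : ℝ) 1, |contactHamiltonian H (s, u)| ≤ M := by
  obtain ⟨M, hM⟩ := (isCompact_Icc.prod isCompact_Icc).exists_bound_of_continuousOn
    (s := Icc 0 (2 * π) ×ˢ Icc (0 : ℝ) 1) hH.contDiff_contactHamiltonian.continuous.continuousOn
  refine ⟨M, fun s u hu => ?_⟩
  obtain ⟨s', hs', heq⟩ := (hH.contactHamiltonian_periodic hu).exists_mem_Ico₀ two_pi_pos s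
  rw [show contactHamiltonian H (s, u) = contactHamiltonian H (s', u) from heq]
  exact hM _ ⟨Ico_subset_Icc_self hs', hu⟩

lemma exists_coordXY_locally_injective :
    ∃ r > 0, ∀ u ∈ Icc (0 : ℝ) 1, ∀ s₁ ∈ Icc 0 (2 * π), ∀ s₂, |s₂ - s₁| ≤ r →
      coordX H (s₁, u) = coordX H (s₂, u) → coordY H (s₁, u) = coordY H (s₂, u) → s₁ = s₂ := by
  set A : Set (ℝ × ℝ) := Icc (-π) (3 * π) ×ˢ Icc 0 1
  have hA : IsCompact A := isCompact_Icc.prod isCompact_Icc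
  have hXs := hH.contDiff_coordX.contDiff_partialFst
  have hYs := hH.contDiff_coordY.contDiff_partialFst
  obtain ⟨δ, hδ, hδV⟩ := hA.exists_forall_le' (a := 0)
    (f := fun p => ‖(partialFst (coordX H) p, partialFst (coordY H) p)‖)
    (hXs.continuous.prodMk hYs.continuous).norm.continuousOn
    fun p hp => norm_pos_iff.2 (hH.partialFst_coordXY_ne_zero p.1 hp.2)
  obtain ⟨M, hM⟩ := hA.exists_bound_of_continuousOn
    (f := fun p => (partialFst (partialFst (coordX H)) p, partialFst (partialFst (coordY H)) p))
    (hXs.contDiff_partialFst.continuous.prodMk hYs.contDiff_partialFst.continuous).continuousOn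
  have hM0 : 0 ≤ M := (norm_nonneg _).trans
    (hM (0, 0) ⟨⟨by linarith [pi_pos], by linarith [pi_pos]⟩, le_rfl, zero_le_one⟩)
  refine ⟨min π (δ / (M + 1)), by positivity, fun u hu s₁ hs₁ s₂ hd hx hy => ?_⟩
  have hseg : ∀ a ∈ uIcc s₁ s₂, (a, u) ∈ A := by
    have := abs_le.1 (hd.trans (min_le_left _ _))
    refine fun a ha => ⟨uIcc_subset_Icc ?_ ?_ ha, hu⟩ <;>
      constructor <;> linarith [hs₁.1, hs₁.2]
  refine eq_of_apply_eq_of_norm_deriv2_le (f := fun a => (coordX H (a, u), coordY H (a, u)))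
    (fun a _ => (hH.contDiff_coordX.hasDerivAt_partialFst a u).prodMk
      (hH.contDiff_coordY.hasDerivAt_partialFst a u))
    (fun a _ => (hXs.hasDerivAt_partialFst a u).prodMk (hYs.hasDerivAt_partialFst a u))
    (fun a ha => hM _ (hseg a ha)) ?_ (Prod.ext hx hy)
  calc M * |s₂ - s₁| ≤ M * (δ / (M + 1)) := by gcongr; exact hd.trans (min_le_right _ _)
    _ < δ := by rw [← mul_div_assoc, div_lt_iff₀ (by positivity)]; nlinarith
    _ ≤ _ := hδV _ (hseg s₁ left_mem_uIcc)

lemma exists_dist_knot_ge {r : ℝ} (hr : 0 < r) :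
    ∃ η > 0, ∀ u ∈ Icc (0 : ℝ) 1, ∀ s₁ ∈ Icc 0 (2 * π), ∀ s₂, r ≤ |s₂ - s₁| → |s₂ - s₁| ≤ π →
      η ≤ dist (H s₁ u) (H s₂ u) := by
  have hd : Continuous fun q : ℝ × ℝ × ℝ => |q.2.1 - q.1| := by fun_prop
  set K : Set (ℝ × ℝ × ℝ) := (Icc 0 (2 * π) ×ˢ Icc (-π) (3 * π) ×ˢ Icc 0 1) ∩
    ({q | r ≤ |q.2.1 - q.1|} ∩ {q | |q.2.1 - q.1| ≤ π})
  have hK : IsCompact K := (isCompact_Icc.prod (isCompact_Icc.prod isCompact_Icc)).inter_right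
    ((isClosed_le continuous_const hd).inter (isClosed_le hd continuous_const))
  have hHc : Continuous fun p : ℝ × ℝ => H p.1 p.2 := hH.smooth.continuous
  obtain ⟨η, hη, hηK⟩ := hK.exists_forall_le' (a := 0)
    (f := fun q => dist (H q.1 q.2.2) (H q.2.1 q.2.2)) (by fun_prop)
    fun q ⟨⟨_, _, hu⟩, hr₁, hπ⟩ => dist_pos.2 <| (hH.legendrian _ hu).apply_ne_of_abs_sub_lt
      (fun h => by simp only [mem_ofPred_eq, h, sub_self, abs_zero] at hr₁; linarith)
      (by simp only [mem_ofPred_eq] at hπ; linarith [pi_pos])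
  refine ⟨η, hη, fun u hu s₁ hs₁ s₂ hr₁ hπ => hηK (s₁, s₂, u) ⟨⟨hs₁, ?_, hu⟩, hr₁, hπ⟩⟩
  have := abs_le.1 hπ
  constructor <;> linarith [hs₁.1, hs₁.2]

lemma exists_reebPushoff_injective :
    ∃ c₀ > 0, ∀ u ∈ Icc (0 : ℝ) 1, ∀ c, |c| ≤ c₀ → InjectiveModTwoPi (reebPushoff H u c) := by
  obtain ⟨r, hr, hloc⟩ := hH.exists_coordXY_locally_injective
  obtain ⟨η, hη, hsep⟩ := hH.exists_dist_knot_ge hr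
  obtain ⟨M, hM⟩ := hH.exists_abs_contactHamiltonian_le
  have hM0 : 0 ≤ M := (abs_nonneg _).trans (hM 0 0 ⟨le_rfl, zero_le_one⟩)
  refine ⟨η / (2 * M + 1), by positivity, fun u hu c hc s₁ s₂ => ?_⟩
  refine (hH.reebPushoff_periodic hu c).exists_int_eq_add_of_apply_eq two_pi_pos
    fun s₁ hs₁ s₂ hπ heq => ?_
  rw [mul_div_cancel_left₀ _ two_ne_zero] at hπ
  by_contra hne
  rcases le_or_gt |s₂ - s₁| r with hr₁ | hr₁
  · exact hne (hloc u hu s₁ hs₁ s₂ hr₁ (congrArg (·.1) heq) (congrArg (·.2.1) heq))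
  have hpush (s : ℝ) : dist (reebPushoff H u c s) (H s u) ≤ η / (2 * M + 1) * M := by
    rw [dist_reebPushoff, abs_mul]
    exact mul_le_mul hc (hM s u hu) (abs_nonneg _) (by positivity)
  refine lt_irrefl η <| calc
    η ≤ dist (H s₁ u) (H s₂ u) := hsep u hu s₁ hs₁ s₂ hr₁.le hπ
    _ ≤ dist (reebPushoff H u c s₁) (H s₁ u) + dist (reebPushoff H u c s₂) (H s₂ u) := by
        rw [← heq]; exact dist_triangle_left _ _ _
    _ ≤ 2 * (η / (2 * M + 1) * M) := by linarith [hpush s₁, hpush s₂]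
    _ < η := by
        rw [div_mul_eq_mul_div, ← mul_div_assoc, div_lt_iff₀ (by positivity)]
        nlinarith

theorem isLagConcordance_concordanceCyl {K₀ K₁ : ℝ → R3}
    (h0 : ∀ s, H s 0 = K₀ s) (h1 : ∀ s, H s 1 = K₁ s) (hβ : ContDiff ℝ (⊤ : ℕ∞) β)
    (hβI : range β = Icc 0 1) (hβT : ∃ T > 0, (∀ t ≤ -T, β t = 0) ∧ ∀ t ≥ T, β t = 1)
    (hinj : ∀ t, InjectiveModTwoPi (reebPushoff H (β t) (deriv β t))) :
    IsLagConcordance K₀ K₁ (concordanceCyl H β) := by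
  have hβmem (t : ℝ) : β t ∈ Icc 0 1 := hβI ▸ mem_range_self t
  obtain ⟨T, hT, hβ0, hβ1⟩ := hβT
  refine ⟨hH.contDiff_concordanceCyl hβ, fun s t => ?_, fun s₁ t₁ s₂ t₂ heq => ?_,
    hH.linearIndependent_pd_concordanceCyl hβ hβmem, hH.isLagrangianCyl_concordanceCyl hβ hβmem,
    T, hT, fun s t ht => ?_, fun s t ht => ?_⟩
  · exact congrArg (·, t) (hH.reebPushoff_periodic (hβmem t) _ s)
  · obtain rfl : t₁ = t₂ := congrArg Prod.snd heq
    exact ⟨rfl, hinj t₁ s₁ s₂ (congrArg Prod.fst heq)⟩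
  · have hd : deriv β t = 0 := IsLocalMin.deriv_eq_zero <|
      Eventually.of_forall fun t' => (hβ0 t ht).symm ▸ (hβmem t').1
    simp only [concordanceCyl, hd, reebPushoff_zero, hβ0 t ht, h0]
  · have hd : deriv β t = 0 := IsLocalMax.deriv_eq_zero <|
      Eventually.of_forall fun t' => (hβ1 t ht).symm ▸ (hβmem t').2
    simp only [concordanceCyl, hd, reebPushoff_zero, hβ1 t ht, h1]

theorem exists_lagConcordance_close {K₀ K₁ : ℝ → R3} (h0 : ∀ s, H s 0 = K₀ s)
    (h1 : ∀ s, H s 1 = K₁ s) {ε : ℝ} (hε : 0 < ε) :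
    ∃ (C : ℝ → ℝ → R4) (β : ℝ → ℝ), IsLagConcordance K₀ K₁ C ∧
      ContDiff ℝ (⊤ : ℕ∞) β ∧ Monotone β ∧ range β = Icc 0 1 ∧
      ∀ s t, dist (C s t) ((H s (β t), t) : R4) < ε := by
  obtain ⟨c₀, hc₀, hinj⟩ := hH.exists_reebPushoff_injective
  obtain ⟨M, hM⟩ := hH.exists_abs_contactHamiltonian_le
  have hM0 : 0 ≤ M := (abs_nonneg _).trans (hM 0 0 ⟨le_rfl, zero_le_one⟩)
  obtain ⟨β, hβ, hmono, hrange, hT, hβ'⟩ :=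
    exists_smooth_step (lt_min hc₀ (by positivity : 0 < ε / (M + 1)))
  have hβmem (t : ℝ) : β t ∈ Icc 0 1 := hrange ▸ mem_range_self t
  refine ⟨concordanceCyl H β, β, hH.isLagConcordance_concordanceCyl h0 h1 hβ hrange hT
    fun t => hinj _ (hβmem t) _ ((hβ' t).trans (min_le_left _ _)), hβ, hmono, hrange,
    fun s t => ?_⟩
  calc dist (concordanceCyl H β s t) (H s (β t), t)
      = |deriv β t| * |contactHamiltonian H (s, β t)| := dist_concordanceCyl H β s t
    _ ≤ ε / (M + 1) * M :=
        mul_le_mul ((hβ' t).trans (min_le_right _ _)) (hM s _ (hβmem t)) (abs_nonneg _)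
          (by positivity)
    _ < ε := by rw [div_mul_eq_mul_div, div_lt_iff₀ (by positivity)]; nlinarith

end IsLegendrianIsotopy

/-- a Legendrian isotopy `H` from `K₀` to `K₁` gives a Lagrangian
concordance `K₀ ≺ K₁`; moreover for every `ε > 0` the concordance may be chosen
`C⁰`-close to the graph of `H`, after reparametrizing `[0,1]` by a smooth weakly
increasing surjection `β : ℝ → [0,1]`. -/
theorem stmt3 (K₀ K₁ : ℝ → R3) (H : ℝ → ℝ → R3)
    (hH : ContDiff ℝ (⊤ : ℕ∞) (fun p : ℝ × ℝ => H p.1 p.2))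
    (hleg : ∀ u ∈ Icc (0:ℝ) 1, IsLegendrianKnot fun s => H s u)
    (h0 : ∀ s, H s 0 = K₀ s) (h1 : ∀ s, H s 1 = K₁ s) :
    Prec K₀ K₁ ∧
    ∀ ε > 0, ∃ (C : ℝ → ℝ → R4) (β : ℝ → ℝ),
      IsLagConcordance K₀ K₁ C ∧
      ContDiff ℝ (⊤ : ℕ∞) β ∧ Monotone β ∧ Set.range β = Icc (0:ℝ) 1 ∧
      ∀ s t, dist (C s t) ((H s (β t), t) : R4) < ε := by
  have hclose := fun ε (hε : ε > 0) =>
    IsLegendrianIsotopy.exists_lagConcordance_close ⟨hH, hleg⟩ h0 h1 hε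
  obtain ⟨C, -, hC, -⟩ := hclose 1 one_pos
  exact ⟨⟨C, hC⟩, hclose⟩
end
end
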